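/- arXiv:1306.0409 — 2 statements merged into one kernel-verified Lean document; each statement's English description precedes it below -/
import Mathlib

section
/- Let T be a 2×2 unitary matrix with overlap c = max_{k,l=1,2} |T_{lk}| and γ = arccos c. Then for every unit vector ψ ∈ ℂ² and all α, β ≥ 0, setting λ = max(α, β), H_α(|ψ|²) + H_β(|Tψ|²) ≥ min_{θ ∈ [0,γ]} [ H_λ((cos²θ, sin²θ)) + H_λ((cos²(γ−θ), sin²(γ−θ))) ]. -/
/-!
Write `|ψ|² = (cos² x₁, sin² x₁)` and `|Tψ|² = (cos² x₂, sin² x₂)` with `x₁, x₂ ∈ [0, π/4]`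
(swapping the two coordinates if necessary), and `c = cos γ`. The entries of the unitary `T` have
moduli `u, v, v, u` with `max u v = c`, so the triangle inequality for `Tψ` together with the
rearrangement inequality gives `cos x₂ ≤ cos (γ - x₁)`, i.e. `γ ≤ x₁ + x₂`. Since
`θ ↦ H_λ(cos² θ, sin² θ)` is nondecreasing on `[0, π/4]` (the binary Rényi entropy is
Schur concave), the value of the objective at `θ = min x₁ γ` is at most
`H_λ(|ψ|²) + H_λ(|Tψ|²)`. Finally `H_λ ≤ H_α` and `H_λ ≤ H_β`: for `λ ≠ 1`, `H_λ(p)` is minus the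
slope between `1` and `λ` of the convex function `λ ↦ log (p₁^λ + p₂^λ)`, which vanishes at `1`
and whose derivative there is `-H_1(p)`.
-/

open Real

/-- Power with the convention `0 ^ λ = 0` for all `λ ≥ 0`. -/
noncomputable def pw (p lam : ℝ) : ℝ := if p = 0 then 0 else p ^ lam

/-- Rényi entropy of the two-point probability vector `(p₁, p₂)`:
`H_λ(p) = (1/(1-λ)) log (p₁^λ + p₂^λ)` for `λ ≠ 1`, Shannon entropy for `λ = 1`. -/
noncomputable def Hren (lam p1 p2 : ℝ) : ℝ :=
  if lam = 1 then -(p1 * Real.log p1 + p2 * Real.log p2)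
  else (1 - lam)⁻¹ * Real.log (pw p1 lam + pw p2 lam)

/-- `g(θ) = H_α((cos²θ, sin²θ)) + H_β((cos²(γ−θ), sin²(γ−θ)))`. -/
noncomputable def gfun (α β γ θ : ℝ) : ℝ :=
  Hren α (Real.cos θ ^ 2) (Real.sin θ ^ 2) +
    Hren β (Real.cos (γ - θ) ^ 2) (Real.sin (γ - θ) ^ 2)

open Set Matrix

lemma Hren_comm (lam p q : ℝ) : Hren lam p q = Hren lam q p := by
  unfold Hren; rw [add_comm (pw p lam), add_comm (p * log p)]

lemma Hren_one_zero (lam : ℝ) : Hren lam 1 0 = 0 := by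
  unfold Hren pw; split_ifs <;> simp_all

lemma Hren_one_eq_negMulLog (p q : ℝ) : Hren 1 p q = negMulLog p + negMulLog q := by
  simp only [Hren, if_true, negMulLog]; ring

lemma Hren_of_pos {lam p q : ℝ} (hlam : lam ≠ 1) (hp : 0 < p) (hq : 0 < q) :
    Hren lam p q = (1 - lam)⁻¹ * log (p ^ lam + q ^ lam) := by
  simp only [Hren, pw, if_neg hlam, if_neg hp.ne', if_neg hq.ne']

lemma Hren_nonneg (lam : ℝ) {p q : ℝ} (hp : 0 ≤ p) (hq : 0 ≤ q) (hpq : p + q = 1) :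
    0 ≤ Hren lam p q := by
  rcases hp.eq_or_lt with rfl | hp
  · rw [zero_add] at hpq; rw [hpq, Hren_comm, Hren_one_zero]
  rcases hq.eq_or_lt with rfl | hq
  · rw [add_zero] at hpq; rw [hpq, Hren_one_zero]
  have hp1 : p ≤ 1 := by linarith
  have hq1 : q ≤ 1 := by linarith
  rcases lt_trichotomy lam 1 with hl | rfl | hl
  · rw [Hren_of_pos hl.ne hp hq]
    refine mul_nonneg (inv_nonneg.2 (by linarith)) (log_nonneg ?_)
    linarith [self_le_rpow_of_le_one hp.le hp1 hl.le, self_le_rpow_of_le_one hq.le hq1 hl.le]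
  · rw [Hren_one_eq_negMulLog]
    exact add_nonneg (negMulLog_nonneg hp.le hp1) (negMulLog_nonneg hq.le hq1)
  · rw [Hren_of_pos hl.ne' hp hq]
    refine mul_nonneg_of_nonpos_of_nonpos (inv_nonpos.2 (by linarith))
      (log_nonpos (by positivity) ?_)
    linarith [rpow_le_self_of_le_one hp.le hp1 hl.le, rpow_le_self_of_le_one hq.le hq1 hl.le]

noncomputable def logPowSum (p q l : ℝ) : ℝ := log (p ^ l + q ^ l)

lemma convexOn_logPowSum {p q : ℝ} (hp : 0 < p) (hq : 0 < q) :
    ConvexOn ℝ univ (logPowSum p q) := by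
  refine ⟨convex_univ, fun x _ y _ a b ha hb hab => ?_⟩
  set P := p ^ x + q ^ x
  set Q := p ^ y + q ^ y
  have hP : 0 < P := by positivity
  have hQ : 0 < Q := by positivity
  -- two-term Hölder inequality, summing weighted AM–GM over the two terms
  have amgm : ∀ r, 0 < r →
      r ^ (a * x + b * y) ≤ P ^ a * Q ^ b * (a * (r ^ x / P) + b * (r ^ y / Q)) := by
    intro r hr
    calc r ^ (a * x + b * y) = P ^ a * Q ^ b * ((r ^ x / P) ^ a * (r ^ y / Q) ^ b) := by
          rw [div_rpow (by positivity) hP.le, div_rpow (by positivity) hQ.le, rpow_add hr,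
            mul_comm a x, mul_comm b y, rpow_mul hr.le, rpow_mul hr.le]
          field_simp
      _ ≤ _ := mul_le_mul_of_nonneg_left
          (geom_mean_le_arith_mean2_weighted ha hb (by positivity) (by positivity) hab)
          (by positivity)
  have hsum : p ^ (a * x + b * y) + q ^ (a * x + b * y) ≤ P ^ a * Q ^ b := by
    calc _ ≤ _ := add_le_add (amgm p hp) (amgm q hq)
      _ = P ^ a * Q ^ b * (a + b) := by field_simp; ring
      _ = P ^ a * Q ^ b := by rw [hab, mul_one]
  calc logPowSum p q (a • x + b • y) ≤ log (P ^ a * Q ^ b) :=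
        log_le_log (by positivity) hsum
    _ = a • logPowSum p q x + b • logPowSum p q y := by
        rw [log_mul (by positivity) (by positivity), log_rpow hP, log_rpow hQ]; rfl

lemma hasDerivAt_logPowSum_one {p q : ℝ} (hp : 0 < p) (hq : 0 < q) (hpq : p + q = 1) :
    HasDerivAt (logPowSum p q) (p * log p + q * log q) 1 := by
  have hsum : HasDerivAt (fun l : ℝ => p ^ l + q ^ l)
      (p ^ (1 : ℝ) * log p + q ^ (1 : ℝ) * log q) 1 :=
    (hasStrictDerivAt_const_rpow hp 1).hasDerivAt.fun_add
      (hasStrictDerivAt_const_rpow hq 1).hasDerivAt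
  show HasDerivAt (fun l : ℝ => log (p ^ l + q ^ l)) _ 1
  simpa [hpq] using hsum.log (by positivity)

lemma Hren_eq_neg_slope {lam p q : ℝ} (hlam : lam ≠ 1) (hp : 0 < p) (hq : 0 < q)
    (hpq : p + q = 1) : Hren lam p q = -slope (logPowSum p q) 1 lam := by
  have h1 : lam - 1 ≠ 0 := sub_ne_zero.2 hlam
  have h2 : 1 - lam ≠ 0 := sub_ne_zero.2 (Ne.symm hlam)
  rw [Hren_of_pos hlam hp hq, slope_def_field, logPowSum, logPowSum, rpow_one, rpow_one, hpq,
    log_one, sub_zero]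
  field_simp
  ring

theorem antitone_Hren {p q : ℝ} (hp : 0 ≤ p) (hq : 0 ≤ q) (hpq : p + q = 1) :
    Antitone fun lam => Hren lam p q := by
  intro a b hab
  dsimp only
  rcases hp.eq_or_lt with rfl | hp
  · rw [zero_add] at hpq; rw [hpq, Hren_comm, Hren_one_zero, Hren_comm, Hren_one_zero]
  rcases hq.eq_or_lt with rfl | hq
  · rw [add_zero] at hpq; rw [hpq, Hren_one_zero, Hren_one_zero]
  have hG := convexOn_logPowSum hp hq
  have hG' := hasDerivAt_logPowSum_one hp hq hpq
  have hH1 : Hren 1 p q = -(p * log p + q * log q) := if_pos rfl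
  rcases hab.eq_or_lt with rfl | hab
  · rfl
  rcases eq_or_ne a 1 with rfl | ha
  · rw [Hren_eq_neg_slope hab.ne' hp hq hpq, hH1, neg_le_neg_iff]
    exact hG.le_slope_of_hasDerivAt trivial trivial hab hG'
  rcases eq_or_ne b 1 with rfl | hb
  · rw [Hren_eq_neg_slope ha hp hq hpq, hH1, neg_le_neg_iff, slope_comm]
    exact hG.slope_le_of_hasDerivAt trivial trivial hab hG'
  rw [Hren_eq_neg_slope ha hp hq hpq, Hren_eq_neg_slope hb hp hq hpq, neg_le_neg_iff]
  exact hG.slope_mono trivial ⟨trivial, ha⟩ ⟨trivial, hb⟩ hab.le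

lemma ConcaveOn.add_apply_one_sub_le {s : Set ℝ} {f : ℝ → ℝ} (hf : ConcaveOn ℝ s f) {p q : ℝ}
    (hq : q ∈ s) (hq' : 1 - q ∈ s) (hp : p ∈ Icc (1 - q) q) :
    f q + f (1 - q) ≤ f p + f (1 - p) := by
  obtain ⟨a, b, ha, hb, hab, rfl⟩ := (Convex.mem_Icc (hp.1.trans hp.2)).1 hp
  have h₁ := hf.2 hq' hq ha hb hab
  have h₂ := hf.2 hq hq' ha hb hab
  simp only [smul_eq_mul] at h₁ h₂
  rw [show 1 - (a * (1 - q) + b * q) = a * q + b * (1 - q) by linear_combination -hab]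
  linear_combination h₁ + h₂ - (f q + f (1 - q)) * hab

lemma ConvexOn.add_apply_one_sub_le {s : Set ℝ} {f : ℝ → ℝ} (hf : ConvexOn ℝ s f) {p q : ℝ}
    (hq : q ∈ s) (hq' : 1 - q ∈ s) (hp : p ∈ Icc (1 - q) q) :
    f p + f (1 - p) ≤ f q + f (1 - q) := by
  have := hf.neg.add_apply_one_sub_le hq hq' hp
  simp only [Pi.neg_apply] at this
  linarith

theorem antitoneOn_Hren_one_sub {lam : ℝ} (hlam : 0 ≤ lam) :
    AntitoneOn (fun p => Hren lam p (1 - p)) (Icc (1 / 2) 1) := by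
  rintro p ⟨hp, -⟩ q ⟨-, hq⟩ hpq
  dsimp only
  rcases hq.eq_or_lt with rfl | hq
  · rw [sub_self, Hren_one_zero]
    exact Hren_nonneg lam (by linarith) (by linarith) (by ring)
  have hmem : p ∈ Icc (1 - q) q := ⟨by linarith, hpq⟩
  have hq₀ : 0 < q := by linarith
  have hq₁ : 0 < 1 - q := by linarith
  have hp₀ : 0 < p := by linarith
  have hp₁ : 0 < 1 - p := by linarith
  rcases lt_trichotomy lam 1 with hl | rfl | hl
  · rw [Hren_of_pos hl.ne hq₀ hq₁, Hren_of_pos hl.ne hp₀ hp₁]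
    refine mul_le_mul_of_nonneg_left (log_le_log (by positivity) ?_) (inv_nonneg.2 (by linarith))
    exact (concaveOn_rpow hlam hl.le).add_apply_one_sub_le hq₀.le hq₁.le hmem
  · rw [Hren_one_eq_negMulLog, Hren_one_eq_negMulLog]
    exact concaveOn_negMulLog.add_apply_one_sub_le hq₀.le hq₁.le hmem
  · rw [Hren_of_pos hl.ne' hq₀ hq₁, Hren_of_pos hl.ne' hp₀ hp₁]
    refine mul_le_mul_of_nonpos_left (log_le_log (by positivity) ?_) (inv_nonpos.2 (by linarith))
    exact (convexOn_rpow hl.le).add_apply_one_sub_le hq₀.le hq₁.le hmem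

noncomputable def angleEntropy (lam θ : ℝ) : ℝ := Hren lam (cos θ ^ 2) (sin θ ^ 2)

lemma angleEntropy_nonneg (lam θ : ℝ) : 0 ≤ angleEntropy lam θ :=
  Hren_nonneg lam (sq_nonneg _) (sq_nonneg _) (cos_sq_add_sin_sq θ)

lemma monotoneOn_angleEntropy {lam : ℝ} (hlam : 0 ≤ lam) :
    MonotoneOn (angleEntropy lam) (Icc 0 (π / 4)) := by
  intro x hx y hy hxy
  have hπ := pi_pos
  have hcos : cos (2 * y) ≤ cos (2 * x) :=
    cos_le_cos_of_nonneg_of_le_pi (by linarith [hx.1]) (by linarith [hy.2]) (by linarith)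
  have hcos₀ : 0 ≤ cos (2 * y) := cos_nonneg_of_mem_Icc ⟨by linarith [hy.1], by linarith [hy.2]⟩
  have h := antitoneOn_Hren_one_sub hlam (a := cos y ^ 2) (b := cos x ^ 2)
    ⟨by rw [cos_sq]; linarith, cos_sq_le_one y⟩ ⟨by rw [cos_sq]; linarith, cos_sq_le_one x⟩
    (by rw [cos_sq, cos_sq]; linarith)
  simpa only [angleEntropy, ← sin_sq] using h

lemma sInf_gfun_le_angleEntropy_add {lam γ x₁ x₂ : ℝ} (hlam : 0 ≤ lam) (hγ : 0 ≤ γ)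
    (hx₁ : x₁ ∈ Icc 0 (π / 4)) (hx₂ : x₂ ∈ Icc 0 (π / 4)) (hsum : γ ≤ x₁ + x₂) :
    sInf ((fun θ : ℝ => gfun lam lam γ θ) '' Icc 0 γ) ≤
      angleEntropy lam x₁ + angleEntropy lam x₂ := by
  have hbdd : BddBelow ((fun θ : ℝ => gfun lam lam γ θ) '' Icc 0 γ) := by
    refine ⟨0, ?_⟩
    rintro _ ⟨θ, -, rfl⟩
    exact add_nonneg (angleEntropy_nonneg lam θ) (angleEntropy_nonneg lam (γ - θ))
  have hθ : min x₁ γ ∈ Icc 0 γ := ⟨le_min hx₁.1 hγ, min_le_right _ _⟩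
  have hγθ : γ - min x₁ γ ≤ x₂ := by
    rcases min_cases x₁ γ with ⟨h, -⟩ | ⟨h, -⟩ <;> rw [h] <;> linarith [hx₂.1]
  have mono := monotoneOn_angleEntropy hlam
  calc sInf ((fun θ : ℝ => gfun lam lam γ θ) '' Icc 0 γ) ≤ gfun lam lam γ (min x₁ γ) :=
        csInf_le hbdd ⟨_, hθ, rfl⟩
    _ = angleEntropy lam (min x₁ γ) + angleEntropy lam (γ - min x₁ γ) := rfl
    _ ≤ angleEntropy lam x₁ + angleEntropy lam x₂ := by
        gcongr
        · exact mono ⟨hθ.1, (min_le_left _ _).trans hx₁.2⟩ hx₁ (min_le_left _ _)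
        · exact mono ⟨by linarith [hθ.2], hγθ.trans hx₂.2⟩ hx₂ hγθ

lemma exists_angle_cos_eq_max {a s : ℝ} (ha : 0 ≤ a) (hs : 0 ≤ s) (has : a ^ 2 + s ^ 2 = 1) :
    ∃ x ∈ Icc 0 (π / 4), cos x = max a s ∧ sin x = min a s := by
  wlog h : s ≤ a generalizing a s
  · simpa only [max_comm, min_comm] using this hs ha (by linarith) (by linarith)
  rw [max_eq_left h, min_eq_right h]
  have hsqrt : √2 / 2 ≤ a := by
    have : √2 ≤ 2 * a := sqrt_le_iff.2 ⟨by linarith, by nlinarith⟩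
    linarith
  refine ⟨arccos a, ⟨arccos_nonneg a, arccos_le_pi_div_four.2 hsqrt⟩,
    cos_arccos (by linarith) (by nlinarith), ?_⟩
  rw [sin_arccos, show 1 - a ^ 2 = s ^ 2 by linarith, sqrt_sq hs]

lemma angleEntropy_eq_Hren (lam : ℝ) {x a s : ℝ} (hcos : cos x = max a s) (hsin : sin x = min a s) :
    angleEntropy lam x = Hren lam (a ^ 2) (s ^ 2) := by
  rw [angleEntropy, hcos, hsin]
  rcases le_total s a with h | h
  · rw [max_eq_left h, min_eq_right h]
  · rw [max_eq_right h, min_eq_left h, Hren_comm]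

lemma mul_add_mul_le_max_mul_max_add_min_mul_min (u v a s : ℝ) :
    u * a + v * s ≤ max u v * max a s + min u v * min a s := by
  rcases le_total u v with h₁ | h₁ <;> rcases le_total a s with h₂ | h₂ <;>
    simp only [max_eq_left, max_eq_right, min_eq_left, min_eq_right, h₁, h₂] <;> nlinarith

lemma angle_le_add_of_le_mul_add_mul {γ x₁ x₂ u v a s b t : ℝ}
    (hγ : γ ∈ Icc 0 (π / 4)) (hx₁ : x₁ ∈ Icc 0 (π / 4)) (hx₂ : x₂ ∈ Icc 0 (π / 4))
    (hcosγ : cos γ = max u v) (hsinγ : sin γ = min u v)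
    (hcos₁ : cos x₁ = max a s) (hsin₁ : sin x₁ = min a s) (hcos₂ : cos x₂ = max b t)
    (hb : b ≤ u * a + v * s) (ht : t ≤ v * a + u * s) : γ ≤ x₁ + x₂ := by
  have hπ := pi_pos
  rcases le_total γ x₁ with h | h
  · linarith [hx₂.1]
  have hcos : cos x₂ ≤ cos (γ - x₁) := by
    rw [cos_sub, hcosγ, hsinγ, hcos₁, hsin₁, hcos₂]
    refine max_le (hb.trans (mul_add_mul_le_max_mul_max_add_min_mul_min u v a s)) ?_
    rw [max_comm u v, min_comm u v]
    exact ht.trans (mul_add_mul_le_max_mul_max_add_min_mul_min v u a s)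
  have := (strictAntiOn_cos.le_iff_ge ⟨hx₂.1, by linarith [hx₂.2]⟩
    ⟨by linarith, by linarith [hγ.2, hx₁.1]⟩).1 hcos
  linarith

lemma sum_norm_sq_mulVec_of_mem_unitaryGroup {n 𝕜 : Type*} [Fintype n] [DecidableEq n] [RCLike 𝕜]
    {U : Matrix n n 𝕜} (hU : U ∈ unitaryGroup n 𝕜) (x : n → 𝕜) :
    ∑ i, ‖(U *ᵥ x) i‖ ^ 2 = ∑ i, ‖x i‖ ^ 2 := by
  have h : star (U *ᵥ x) ⬝ᵥ (U *ᵥ x) = star x ⬝ᵥ x := by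
    rw [star_mulVec, dotProduct_mulVec, vecMul_vecMul, ← star_eq_conjTranspose,
      mem_unitaryGroup_iff'.mp hU, vecMul_one]
  simp only [dotProduct, Pi.star_apply, RCLike.star_def, RCLike.conj_mul] at h
  exact_mod_cast h

lemma sum_norm_sq_col_of_mem_unitaryGroup {n 𝕜 : Type*} [Fintype n] [DecidableEq n] [RCLike 𝕜]
    {U : Matrix n n 𝕜} (hU : U ∈ unitaryGroup n 𝕜) (j : n) : ∑ i, ‖U i j‖ ^ 2 = 1 := by
  simpa [mulVec_single_one, Pi.single_apply, apply_ite] using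
    sum_norm_sq_mulVec_of_mem_unitaryGroup hU (Pi.single j 1)

lemma norm_entries_of_mem_unitaryGroup_fin_two {T : Matrix (Fin 2) (Fin 2) ℂ}
    (hT : T ∈ unitaryGroup (Fin 2) ℂ) :
    ‖T 1 0‖ = ‖T 0 1‖ ∧ ‖T 1 1‖ = ‖T 0 0‖ ∧ ‖T 0 0‖ ^ 2 + ‖T 0 1‖ ^ 2 = 1 := by
  have col₀ := sum_norm_sq_col_of_mem_unitaryGroup hT 0
  have col₁ := sum_norm_sq_col_of_mem_unitaryGroup hT 1
  have row₀ := sum_norm_sq_col_of_mem_unitaryGroup (Unitary.star_mem hT) 0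
  simp only [Fin.sum_univ_two, star_apply, norm_star] at col₀ col₁ row₀
  refine ⟨(sq_eq_sq₀ (norm_nonneg _) (norm_nonneg _)).1 (by linarith),
    (sq_eq_sq₀ (norm_nonneg _) (norm_nonneg _)).1 (by linarith), row₀⟩

lemma norm_mulVec_fin_two_le (T : Matrix (Fin 2) (Fin 2) ℂ) (ψ : Fin 2 → ℂ) (i : Fin 2) :
    ‖(T *ᵥ ψ) i‖ ≤ ‖T i 0‖ * ‖ψ 0‖ + ‖T i 1‖ * ‖ψ 1‖ := by
  simp only [mulVec, dotProduct, Fin.sum_univ_two, ← norm_mul]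
  exact norm_add_le _ _

lemma isGreatest_norm_entries_fin_two {T : Matrix (Fin 2) (Fin 2) ℂ}
    (h₁₀ : ‖T 1 0‖ = ‖T 0 1‖) (h₁₁ : ‖T 1 1‖ = ‖T 0 0‖) :
    IsGreatest {x : ℝ | ∃ k l : Fin 2, x = ‖T l k‖} (max ‖T 0 0‖ ‖T 0 1‖) := by
  refine ⟨?_, ?_⟩
  · rcases max_choice ‖T 0 0‖ ‖T 0 1‖ with h | h <;> rw [h]
    exacts [⟨0, 0, rfl⟩, ⟨1, 0, rfl⟩]
  · rintro _ ⟨k, l, rfl⟩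
    fin_cases k <;> fin_cases l <;> simp [h₁₀, h₁₁]

theorem stmt_5_general (T : Matrix (Fin 2) (Fin 2) ℂ)
    (hT : T ∈ Matrix.unitaryGroup (Fin 2) ℂ)
    (c γ : ℝ)
    (hc : IsGreatest {x : ℝ | ∃ k l : Fin 2, x = ‖T l k‖} c)
    (hγ : γ = Real.arccos c)
    (α β : ℝ) (hα : 0 ≤ α)
    (lam : ℝ) (hlam : lam = max α β)
    (ψ : Fin 2 → ℂ)
    (hψ : ‖ψ 0‖ ^ 2 + ‖ψ 1‖ ^ 2 = 1) :
    sInf ((fun θ : ℝ => gfun lam lam γ θ) '' Set.Icc 0 γ) ≤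
      Hren α (‖ψ 0‖ ^ 2) (‖ψ 1‖ ^ 2) +
        Hren β (‖T.mulVec ψ 0‖ ^ 2) (‖T.mulVec ψ 1‖ ^ 2) := by
  obtain ⟨h₁₀, h₁₁, hrow⟩ := norm_entries_of_mem_unitaryGroup_fin_two hT
  have hTψ : ‖(T *ᵥ ψ) 0‖ ^ 2 + ‖(T *ᵥ ψ) 1‖ ^ 2 = 1 := by
    simpa only [Fin.sum_univ_two, hψ] using sum_norm_sq_mulVec_of_mem_unitaryGroup hT ψ
  obtain ⟨x₀, hx₀, hcos₀, hsin₀⟩ := exists_angle_cos_eq_max (norm_nonneg _) (norm_nonneg _) hrow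
  obtain ⟨x₁, hx₁, hcos₁, hsin₁⟩ := exists_angle_cos_eq_max (norm_nonneg _) (norm_nonneg _) hψ
  obtain ⟨x₂, hx₂, hcos₂, hsin₂⟩ := exists_angle_cos_eq_max (norm_nonneg _) (norm_nonneg _) hTψ
  have hγx₀ : γ = x₀ := by
    rw [hγ, hc.unique (isGreatest_norm_entries_fin_two h₁₀ h₁₁), ← hcos₀,
      arccos_cos hx₀.1 (by linarith [hx₀.2, pi_pos])]
  subst hγx₀
  have hsum : γ ≤ x₁ + x₂ :=
    angle_le_add_of_le_mul_add_mul hx₀ hx₁ hx₂ hcos₀ hsin₀ hcos₁ hsin₁ hcos₂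
    (norm_mulVec_fin_two_le T ψ 0) (by simpa [h₁₀, h₁₁] using norm_mulVec_fin_two_le T ψ 1)
  have hlam₀ : 0 ≤ lam := hlam ▸ hα.trans (le_max_left α β)
  calc sInf ((fun θ : ℝ => gfun lam lam γ θ) '' Set.Icc 0 γ)
      ≤ angleEntropy lam x₁ + angleEntropy lam x₂ :=
        sInf_gfun_le_angleEntropy_add hlam₀ hx₀.1 hx₁ hx₂ hsum
    _ = Hren lam (‖ψ 0‖ ^ 2) (‖ψ 1‖ ^ 2) + Hren lam (‖(T *ᵥ ψ) 0‖ ^ 2) (‖(T *ᵥ ψ) 1‖ ^ 2) := by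
        rw [angleEntropy_eq_Hren lam hcos₁ hsin₁, angleEntropy_eq_Hren lam hcos₂ hsin₂]
    _ ≤ _ := add_le_add
        (antitone_Hren (sq_nonneg _) (sq_nonneg _) hψ (hlam ▸ le_max_left α β))
        (antitone_Hren (sq_nonneg _) (sq_nonneg _) hTψ (hlam ▸ le_max_right α β))

/-- suboptimal bound with equal indices `λ = max(α, β)` (Corollary 3). -/
theorem stmt_5 (T : Matrix (Fin 2) (Fin 2) ℂ)
    (hT : T ∈ Matrix.unitaryGroup (Fin 2) ℂ)
    (c γ : ℝ)
    (hc : IsGreatest {x : ℝ | ∃ k l : Fin 2, x = ‖T l k‖} c)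
    (hγ : γ = Real.arccos c)
    (α β : ℝ) (hα : 0 ≤ α) (hβ : 0 ≤ β)
    (lam : ℝ) (hlam : lam = max α β)
    (ψ : Fin 2 → ℂ)
    (hψ : ‖ψ 0‖ ^ 2 + ‖ψ 1‖ ^ 2 = 1) :
    sInf ((fun θ : ℝ => gfun lam lam γ θ) '' Set.Icc 0 γ) ≤
      Hren α (‖ψ 0‖ ^ 2) (‖ψ 1‖ ^ 2) +
        Hren β (‖T.mulVec ψ 0‖ ^ 2) (‖T.mulVec ψ 1‖ ^ 2) :=
  stmt_5_general T hT c γ hc hγ α β hα lam hlam ψ hψ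
end

section
/- For all θ, γ ∈ [0, π/4] and all β ≥ 0, H_β((cos²(γ+θ), sin²(γ+θ))) ≥ H_β((cos²(γ−θ), sin²(γ−θ))). Equivalently, for β ≥ 0, β ≠ 1, the quantity Δ(θ, γ) = [ D_β(γ−θ) − D_β(γ+θ) ] / (β − 1) is nonnegative on [0, π/4]², where D_β(x) = (cos²x)^β + (sin²x)^β. -/
/-! For a concave `f`, the sum `f p₁ + f p₂` over pairs with fixed `p₁ + p₂` increases as
`|p₁ - p₂|` decreases: the less spread pair consists of two mirror-image convex combinations of
the more spread one. Taking `f = negMulLog`, `f = p ^ β` (concave for `β ≤ 1`) and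
`f = p ^ β` (convex for `β ≥ 1`, where the factor `1 / (1 - β)` turns negative), every Rényi
entropy of `(cos² x, sin² x)` is a decreasing function of `|cos² x - sin² x| = |cos 2x|`.
For `a = 2γ`, `b = 2θ` in `[0, π/2]` we have `|cos (a + b)| ≤ cos (a - b)`, since
`cos (a - b) ∓ cos (a + b)` equals `2 sin a sin b` resp. `2 cos a cos b`, both nonnegative. -/

open Real

/-- `D_λ(θ) = (cos²θ)^λ + (sin²θ)^λ` (with the convention `0^λ = 0`). -/
noncomputable def Dfun (lam θ : ℝ) : ℝ :=
  pw (Real.cos θ ^ 2) lam + pw (Real.sin θ ^ 2) lam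

open Set

theorem ConcaveOn.add_le_add_of_mem_Icc {s : Set ℝ} {f : ℝ → ℝ} (hf : ConcaveOn ℝ s f)
    {a b x : ℝ} (ha : a ∈ s) (hb : b ∈ s) (hx : x ∈ Icc a b) :
    f a + f b ≤ f x + f (a + b - x) := by
  rcases hx.1.eq_or_lt with rfl | hax
  · rw [add_sub_cancel_left]
  have hba : 0 < b - a := by linarith [hx.2]
  set t := (b - x) / (b - a)
  have ht : 0 ≤ t := div_nonneg (by linarith [hx.2]) hba.le
  have ht' : 0 ≤ 1 - t := by
    rw [sub_nonneg, div_le_one hba]; linarith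
  have hx_eq : t • a + (1 - t) • b = x := by
    simp only [smul_eq_mul, t]; field_simp; ring
  have hy_eq : (1 - t) • a + t • b = a + b - x := by
    simp only [smul_eq_mul, t]; field_simp; ring
  have h₁ := hf.2 ha hb ht ht' (add_sub_cancel t 1)
  have h₂ := hf.2 ha hb ht' ht (sub_add_cancel 1 t)
  rw [hx_eq] at h₁
  rw [hy_eq] at h₂
  simp only [smul_eq_mul] at h₁ h₂
  linarith

theorem ConcaveOn.add_le_add_of_abs_sub_le {s : Set ℝ} {f : ℝ → ℝ} (hf : ConcaveOn ℝ s f)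
    {a b x y : ℝ} (ha : a ∈ s) (hb : b ∈ s) (hsum : x + y = a + b) (hxy : |x - y| ≤ |a - b|) :
    f a + f b ≤ f x + f y := by
  wlog hab : a ≤ b generalizing a b
  · rw [add_comm (f a)]
    exact this hb ha (by linarith) (by rwa [abs_sub_comm b a]) (by linarith)
  obtain rfl : y = a + b - x := by linarith
  rw [abs_of_nonpos (sub_nonpos.2 hab)] at hxy
  obtain ⟨h₁, h₂⟩ := abs_le.1 hxy
  exact hf.add_le_add_of_mem_Icc ha hb ⟨by linarith, by linarith⟩

theorem ConvexOn.add_le_add_of_abs_sub_le {s : Set ℝ} {f : ℝ → ℝ} (hf : ConvexOn ℝ s f)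
    {a b x y : ℝ} (ha : a ∈ s) (hb : b ∈ s) (hsum : x + y = a + b) (hxy : |x - y| ≤ |a - b|) :
    f x + f y ≤ f a + f b := by
  have := hf.neg.add_le_add_of_abs_sub_le ha hb hsum hxy
  simp only [Pi.neg_apply] at this
  linarith

lemma pw_of_ne_zero {lam : ℝ} (h : lam ≠ 0) (p : ℝ) : pw p lam = p ^ lam := by
  unfold pw
  split_ifs with hp
  · rw [hp, zero_rpow h]
  · rfl

lemma pw_nonneg {p : ℝ} (hp : 0 ≤ p) (lam : ℝ) : 0 ≤ pw p lam := by
  unfold pw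
  split_ifs
  exacts [le_rfl, rpow_nonneg hp lam]

lemma pw_pos {p : ℝ} (hp : 0 < p) (lam : ℝ) : 0 < pw p lam := by
  rw [pw, if_neg hp.ne']
  exact rpow_pos_of_pos hp lam

lemma pw_add_pw_pos {p1 p2 : ℝ} (hp1 : 0 ≤ p1) (hp2 : 0 ≤ p2) (h : 0 < p1 + p2) (lam : ℝ) :
    0 < pw p1 lam + pw p2 lam := by
  rcases hp1.eq_or_lt with rfl | hp1
  · linarith [pw_nonneg le_rfl lam, pw_pos (by linarith : 0 < p2) lam]
  · linarith [pw_pos hp1 lam, pw_nonneg hp2 lam]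

-- `pw · 0` is the indicator of `p ≠ 0`
lemma concaveOn_pw_zero : ConcaveOn ℝ (Ici 0) (fun p ↦ pw p 0) := by
  refine ⟨convex_Ici 0, fun x hx y hy a b ha hb hab ↦ ?_⟩
  simp only [pw, rpow_zero, smul_eq_mul]
  by_cases hxy : a * x + b * y = 0
  · have hax : a * x = 0 := by nlinarith [mul_nonneg ha (mem_Ici.1 hx), mul_nonneg hb (mem_Ici.1 hy)]
    have hby : b * y = 0 := by linarith
    rcases mul_eq_zero.1 hax with rfl | rfl <;> rcases mul_eq_zero.1 hby with rfl | rfl <;>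
      simp
  · rw [if_neg hxy]
    split_ifs <;> linarith

lemma concaveOn_pw {lam : ℝ} (h0 : 0 ≤ lam) (h1 : lam ≤ 1) :
    ConcaveOn ℝ (Ici 0) (fun p ↦ pw p lam) := by
  rcases h0.eq_or_lt with rfl | h0
  · exact concaveOn_pw_zero
  · simpa only [pw_of_ne_zero h0.ne'] using Real.concaveOn_rpow h0.le h1

lemma convexOn_pw {lam : ℝ} (h : 1 ≤ lam) : ConvexOn ℝ (Ici 0) (fun p ↦ pw p lam) := by
  simpa only [pw_of_ne_zero (by linarith : lam ≠ 0)] using convexOn_rpow h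

theorem Hren_le_Hren_of_abs_sub_le {lam p1 p2 q1 q2 : ℝ} (hlam : 0 ≤ lam)
    (hp1 : 0 ≤ p1) (hp2 : 0 ≤ p2) (hp : p1 + p2 = 1)
    (hq1 : 0 ≤ q1) (hq2 : 0 ≤ q2) (hq : q1 + q2 = 1) (hpq : |q1 - q2| ≤ |p1 - p2|) :
    Hren lam p1 p2 ≤ Hren lam q1 q2 := by
  have hsum : q1 + q2 = p1 + p2 := hq.trans hp.symm
  unfold Hren
  split_ifs with h1
  · have := concaveOn_negMulLog.add_le_add_of_abs_sub_le hp1 hp2 hsum hpq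
    simp only [negMulLog] at this
    linarith
  · have hPpos := pw_add_pw_pos hp1 hp2 (by linarith) lam
    have hQpos := pw_add_pw_pos hq1 hq2 (by linarith) lam
    rcases lt_or_gt_of_ne h1 with h | h
    · refine mul_le_mul_of_nonneg_left (log_le_log hPpos ?_) (inv_nonneg.2 (by linarith))
      exact (concaveOn_pw hlam h.le).add_le_add_of_abs_sub_le hp1 hp2 hsum hpq
    · refine mul_le_mul_of_nonpos_left (log_le_log hQpos ?_) (inv_nonpos.2 (by linarith))
      exact (convexOn_pw h.le).add_le_add_of_abs_sub_le hp1 hp2 hsum hpq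

theorem abs_cos_add_le_cos_sub {a b : ℝ} (ha : a ∈ Icc 0 (π / 2)) (hb : b ∈ Icc 0 (π / 2)) :
    |cos (a + b)| ≤ cos (a - b) := by
  have hsin : 0 ≤ sin a * sin b :=
    mul_nonneg (sin_nonneg_of_nonneg_of_le_pi ha.1 (by linarith [ha.2, pi_pos]))
      (sin_nonneg_of_nonneg_of_le_pi hb.1 (by linarith [hb.2, pi_pos]))
  have hcos : 0 ≤ cos a * cos b :=
    mul_nonneg (cos_nonneg_of_mem_Icc ⟨by linarith [ha.1, pi_pos], ha.2⟩)
      (cos_nonneg_of_mem_Icc ⟨by linarith [hb.1, pi_pos], hb.2⟩)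
  rw [abs_le, cos_add, cos_sub]
  constructor <;> linarith

theorem abs_cos_sq_sub_sin_sq_add_le {θ γ : ℝ} (hθ : θ ∈ Icc 0 (π / 4)) (hγ : γ ∈ Icc 0 (π / 4)) :
    |cos (γ + θ) ^ 2 - sin (γ + θ) ^ 2| ≤ |cos (γ - θ) ^ 2 - sin (γ - θ) ^ 2| := by
  rw [← cos_two_mul', ← cos_two_mul', mul_add, mul_sub]
  exact (abs_cos_add_le_cos_sub ⟨by linarith [hγ.1], by linarith [hγ.2]⟩
    ⟨by linarith [hθ.1], by linarith [hθ.2]⟩).trans (le_abs_self _)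

/-- `H_β((cos²(γ+θ), sin²(γ+θ))) ≥ H_β((cos²(γ−θ), sin²(γ−θ)))` on
`[0, π/4]²`; equivalently `Δ(θ, γ) = (D_β(γ−θ) − D_β(γ+θ))/(β−1) ≥ 0`. -/
theorem stmt_10 :
    (∀ θ ∈ Set.Icc (0 : ℝ) (Real.pi / 4), ∀ γ ∈ Set.Icc (0 : ℝ) (Real.pi / 4),
      ∀ β : ℝ, 0 ≤ β →
        Hren β (Real.cos (γ - θ) ^ 2) (Real.sin (γ - θ) ^ 2) ≤
          Hren β (Real.cos (γ + θ) ^ 2) (Real.sin (γ + θ) ^ 2)) ∧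
    (∀ θ ∈ Set.Icc (0 : ℝ) (Real.pi / 4), ∀ γ ∈ Set.Icc (0 : ℝ) (Real.pi / 4),
      ∀ β : ℝ, 0 ≤ β → β ≠ 1 →
        0 ≤ (Dfun β (γ - θ) - Dfun β (γ + θ)) / (β - 1)) := by
  refine ⟨fun θ hθ γ hγ β hβ ↦ ?_, fun θ hθ γ hγ β hβ hβ1 ↦ ?_⟩
  · exact Hren_le_Hren_of_abs_sub_le hβ (sq_nonneg _) (sq_nonneg _) (cos_sq_add_sin_sq _)
      (sq_nonneg _) (sq_nonneg _) (cos_sq_add_sin_sq _) (abs_cos_sq_sub_sin_sq_add_le hθ hγ)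
  · have hsum := (cos_sq_add_sin_sq (γ + θ)).trans (cos_sq_add_sin_sq (γ - θ)).symm
    have hmaj := abs_cos_sq_sub_sin_sq_add_le hθ hγ
    have hcos : cos (γ - θ) ^ 2 ∈ Ici 0 := mem_Ici.2 (sq_nonneg _)
    have hsin : sin (γ - θ) ^ 2 ∈ Ici 0 := mem_Ici.2 (sq_nonneg _)
    unfold Dfun
    rcases lt_or_gt_of_ne hβ1 with h | h
    · refine div_nonneg_of_nonpos (sub_nonpos.2 ?_) (by linarith)
      exact (concaveOn_pw hβ h.le).add_le_add_of_abs_sub_le hcos hsin hsum hmaj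
    · refine div_nonneg (sub_nonneg.2 ?_) (by linarith)
      exact (convexOn_pw h.le).add_le_add_of_abs_sub_le hcos hsin hsum hmaj
end
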